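/- Let a ∈ A, p := (a⁺)°, and q := (a⁻)°. Then: (i) p, q ∈ CC(a); (ii) pC|a| and qC|a|; (iii) pa = ap = a⁺; (iv) qa = aq = −a⁻; (v) 0 ≤ p|a| = |a|p = a⁺; (vi) 0 ≤ q|a| = |a|q = a⁻; (vii) pq = qp = 0; (viii) p + q = a°. -/
import Mathlib


/-- A synaptic algebra: a real vector subspace `carrier` of a unital associative
real algebra `R`, containing `1`, equipped with a positive cone `Pos` making it a
partially ordered archimedean real vector space with order unit `1`, and
satisfying conditions [SA2]–[SA9]. The partial order is `a ≤ b ↔ b - a ∈ Pos`. -/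
structure SynapticAlgebra (R : Type*) [Ring R] [Algebra ℝ R] where
  carrier : Set R
  one_mem : (1 : R) ∈ carrier
  add_mem : ∀ {a b : R}, a ∈ carrier → b ∈ carrier → a + b ∈ carrier
  smul_mem : ∀ (t : ℝ) {a : R}, a ∈ carrier → t • a ∈ carrier
  neg_mem : ∀ {a : R}, a ∈ carrier → -a ∈ carrier
  Pos : Set R
  pos_subset : Pos ⊆ carrier
  pos_add : ∀ {a b : R}, a ∈ Pos → b ∈ Pos → a + b ∈ Pos
  pos_smul : ∀ {t : ℝ}, 0 ≤ t → ∀ {a : R}, a ∈ Pos → t • a ∈ Pos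
  pos_antisymm : ∀ {a : R}, a ∈ Pos → -a ∈ Pos → a = 0
  arch : ∀ {a b : R}, a ∈ carrier → b ∈ carrier →
    (∀ n : ℕ, b - (n : ℝ) • a ∈ Pos) → -a ∈ Pos
  one_pos : (1 : R) ∈ Pos
  orderUnit : ∀ {a : R}, a ∈ carrier → ∃ n : ℕ, (n : ℝ) • (1 : R) - a ∈ Pos
  SA2 : ∀ {a b : R}, a ∈ Pos → b ∈ Pos → a * b = b * a → a * b ∈ Pos
  SA3 : ∀ {a : R}, a ∈ carrier → a * a ∈ Pos
  SA4 : ∀ {a b : R}, a ∈ Pos → b ∈ Pos → a * b * a ∈ Pos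
  SA5 : ∀ {a b : R}, a ∈ carrier → b ∈ Pos → a * b * a = 0 → a * b = 0 ∧ b * a = 0
  SA6 : ∀ {a : R}, a ∈ Pos →
    ∃ b : R, b ∈ Pos ∧ (∀ c ∈ carrier, c * a = a * c → c * b = b * c) ∧ b * b = a
  SA7 : ∀ {a : R}, a ∈ carrier →
    ∃ p : R, p ∈ carrier ∧ p * p = p ∧ ∀ b ∈ carrier, (a * b = 0 ↔ p * b = 0)
  SA8 : ∀ {a : R}, a ∈ carrier → a - 1 ∈ Pos → ∃ b ∈ carrier, a * b = 1 ∧ b * a = 1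
  SA9 : ∀ {a b : R}, a ∈ carrier → b ∈ carrier → ∀ s : ℕ → R,
    (∀ n, s n ∈ carrier) → (∀ n, s (n + 1) - s n ∈ Pos) →
    (∀ m n, s m * s n = s n * s m) → (∀ n, s n * b = b * s n) →
    (∀ ε : ℝ, 0 < ε →
      ∃ N : ℕ, ∀ n ≥ N, (a - s n) - (-ε) • (1 : R) ∈ Pos ∧ ε • (1 : R) - (a - s n) ∈ Pos) →
    a * b = b * a

namespace SynapticAlgebra

variable {R : Type*} [Ring R] [Algebra ℝ R]

/-- The partial order of the synaptic algebra: `a ≤ b` iff `b - a` is in the positive cone. -/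
def le (S : SynapticAlgebra R) (a b : R) : Prop := b - a ∈ S.Pos

/-- The identification of a real number `t` with the element `t·1` of the algebra. -/
def scal (_ : SynapticAlgebra R) (t : ℝ) : R := t • (1 : R)

/-- The order-unit norm: `‖a‖ = inf {t : ℝ | 0 < t ∧ -t·1 ≤ a ≤ t·1}`. -/
noncomputable def nrm (S : SynapticAlgebra R) (a : R) : ℝ :=
  sInf {t : ℝ | 0 < t ∧ S.le (S.scal (-t)) a ∧ S.le a (S.scal t)}

/-- `p` is a projection: an idempotent element of the algebra. -/
def IsProj (S : SynapticAlgebra R) (p : R) : Prop := p ∈ S.carrier ∧ p * p = p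

/-- `e` is an effect: an element with `0 ≤ e ≤ 1`. -/
def IsEff (S : SynapticAlgebra R) (e : R) : Prop := e ∈ S.carrier ∧ S.le 0 e ∧ S.le e 1

/-- `b ∈ CC(a)`: `b` is in the algebra and commutes with every element of the
algebra that commutes with `a` (the double commutant of `a`). -/
def inCC (S : SynapticAlgebra R) (a b : R) : Prop :=
  b ∈ S.carrier ∧ ∀ c ∈ S.carrier, c * a = a * c → c * b = b * c

/-- The square root of a positive element (chosen via [SA6]; it is unique). -/
noncomputable def sqrt (S : SynapticAlgebra R) (a : R) : R :=
  @dite R (a ∈ S.Pos) (Classical.dec _) (fun h => Classical.choose (S.SA6 h)) (fun _ => 0)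

/-- The carrier projection `a°` of `a` (chosen via [SA7]; it is unique):
the projection `p` such that for all `b` in the algebra, `ab = 0 ↔ pb = 0`. -/
noncomputable def carr (S : SynapticAlgebra R) (a : R) : R :=
  @dite R (a ∈ S.carrier) (Classical.dec _) (fun h => Classical.choose (S.SA7 h)) (fun _ => 0)

/-- Absolute value: `|a| := (a²)^{1/2}`. -/
noncomputable def abs (S : SynapticAlgebra R) (a : R) : R := S.sqrt (a * a)

/-- Positive part: `a⁺ := ½(|a| + a)`. -/
noncomputable def posPart (S : SynapticAlgebra R) (a : R) : R := (1/2 : ℝ) • (S.abs a + a)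

/-- Negative part: `a⁻ := ½(|a| − a)`. -/
noncomputable def negPart (S : SynapticAlgebra R) (a : R) : R := (1/2 : ℝ) • (S.abs a - a)

/-- Signum: `sgn(a) := (a⁺)° − (a⁻)°`. -/
noncomputable def sgn (S : SynapticAlgebra R) (a : R) : R :=
  S.carr (S.posPart a) - S.carr (S.negPart a)

/-- The Sasaki mapping: `φ_a(b) := (aba)°`. -/
noncomputable def sas (S : SynapticAlgebra R) (a b : R) : R := S.carr (a * b * a)

/-- `m` is the infimum of the projections `p` and `q` in the poset `P` of projections. -/
def IsMeet (S : SynapticAlgebra R) (p q m : R) : Prop :=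
  S.IsProj m ∧ S.le m p ∧ S.le m q ∧ ∀ r, S.IsProj r → S.le r p → S.le r q → S.le r m

/-- `j` is the supremum of the projections `p` and `q` in the poset `P` of projections. -/
def IsJoin (S : SynapticAlgebra R) (p q j : R) : Prop :=
  S.IsProj j ∧ S.le p j ∧ S.le q j ∧ ∀ r, S.IsProj r → S.le p r → S.le q r → S.le j r

end SynapticAlgebra

namespace SynapticAlgebra

variable {R : Type*} [Ring R] [Algebra ℝ R] (S : SynapticAlgebra R)

lemma sub_mem' {a b : R} (ha : a ∈ S.carrier) (hb : b ∈ S.carrier) :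
    a - b ∈ S.carrier := by
  have := S.add_mem ha (S.neg_mem hb); simpa [sub_eq_add_neg] using this

lemma sq_mem {a : R} (ha : a ∈ S.carrier) : a * a ∈ S.carrier :=
  S.pos_subset (S.SA3 ha)

lemma jordan_mem {a b : R} (ha : a ∈ S.carrier) (hb : b ∈ S.carrier) :
    a * b + b * a ∈ S.carrier := by
  have h := S.sub_mem' (S.sub_mem' (S.sq_mem (S.add_mem ha hb)) (S.sq_mem ha)) (S.sq_mem hb)
  have e : (a + b) * (a + b) - a * a - b * b = a * b + b * a := by noncomm_ring
  rwa [e] at h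

lemma mul_zero_symm {a b : R} (ha : a ∈ S.carrier) (hb : b ∈ S.carrier)
    (h : a * b = 0) : b * a = 0 := by
  have hba : b * a ∈ S.carrier := by
    have := S.jordan_mem ha hb
    rwa [h, zero_add] at this
  have h2 : (b * a) * 1 * (b * a) = 0 := by
    rw [mul_one]
    calc b * a * (b * a) = b * (a * b) * a := by noncomm_ring
    _ = 0 := by rw [h, mul_zero, zero_mul]
  have := (S.SA5 hba S.one_pos h2).1
  simpa using this

lemma sqrt_spec {a : R} (h : a ∈ S.Pos) :
    S.sqrt a ∈ S.Pos ∧ (∀ c ∈ S.carrier, c * a = a * c → c * S.sqrt a = S.sqrt a * c) ∧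
      S.sqrt a * S.sqrt a = a := by
  rw [SynapticAlgebra.sqrt, dif_pos h]
  exact Classical.choose_spec (S.SA6 h)

lemma carr_spec {a : R} (h : a ∈ S.carrier) :
    S.carr a ∈ S.carrier ∧ S.carr a * S.carr a = S.carr a ∧
      ∀ b ∈ S.carrier, (a * b = 0 ↔ S.carr a * b = 0) := by
  rw [SynapticAlgebra.carr, dif_pos h]
  exact Classical.choose_spec (S.SA7 h)

lemma carr_mul_right {a : R} (h : a ∈ S.carrier) : a * S.carr a = a := by
  obtain ⟨hp, hpp, hiff⟩ := S.carr_spec h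
  have h1 : (1 : R) - S.carr a ∈ S.carrier := S.sub_mem' S.one_mem hp
  have h2 : S.carr a * (1 - S.carr a) = 0 := by rw [mul_sub, mul_one, hpp, sub_self]
  have h3 : a * (1 - S.carr a) = 0 := (hiff _ h1).mpr h2
  rw [mul_sub, mul_one, sub_eq_zero] at h3
  exact h3.symm

lemma carr_mul_left {a : R} (h : a ∈ S.carrier) : S.carr a * a = a := by
  obtain ⟨hp, hpp, hiff⟩ := S.carr_spec h
  have h1 : (1 : R) - S.carr a ∈ S.carrier := S.sub_mem' S.one_mem hp
  have h2 : S.carr a * (1 - S.carr a) = 0 := by rw [mul_sub, mul_one, hpp, sub_self]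
  have h3 : a * (1 - S.carr a) = 0 := (hiff _ h1).mpr h2
  have h4 : (1 - S.carr a) * a = 0 := S.mul_zero_symm h h1 h3
  rw [sub_mul, one_mul, sub_eq_zero] at h4
  exact h4.symm

/-- The carrier projection is in the double commutant. -/
lemma carr_comm {a : R} (ha : a ∈ S.carrier) {c : R} (hc : c ∈ S.carrier)
    (hca : c * a = a * c) : c * S.carr a = S.carr a * c := by
  obtain ⟨hp, hpp, hiff⟩ := S.carr_spec ha
  set p := S.carr a with hpdef
  have hap : a * p = a := S.carr_mul_right ha
  have hpa : p * a = a := S.carr_mul_left ha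
  set w : R := p * c + c * p - (p * c * p + p * c * p) with hw
  have hwmem : w ∈ S.carrier := by
    have h1 : p * c + c * p ∈ S.carrier := S.jordan_mem hp hc
    have h2 : p * (p * c + c * p) + (p * c + c * p) * p ∈ S.carrier := S.jordan_mem hp h1
    have key : w = (p * c + c * p) + ((p * c + c * p) - (p * (p * c + c * p) + (p * c + c * p) * p)) := by
      have expand : p * (p * c + c * p) + (p * c + c * p) * p
          = (p * p) * c + c * (p * p) + (p * c * p + p * c * p) := by noncomm_ring
      rw [hw, expand, hpp]; noncomm_ring
    rw [key]; exact S.add_mem h1 (S.sub_mem' h1 h2)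
  have haw : a * w = 0 := by
    have e1 : a * (p * c) = c * a := by rw [← mul_assoc, hap, ← hca]
    have e2 : a * (c * p) = c * a := by
      rw [← mul_assoc, ← hca, mul_assoc, hap]
    have e3 : a * (p * c * p) = c * a := by
      rw [show a * (p * c * p) = (a * p) * c * p by noncomm_ring, hap, ← hca,
        mul_assoc, hap]
    rw [hw, mul_sub, mul_add, mul_add, e1, e2, e3, sub_self]
  have hpw : p * w = 0 := (hiff w hwmem).mp haw
  have hwp : w * p = 0 := S.mul_zero_symm hp hwmem hpw
  have hpw2 : p * c - p * c * p = 0 := by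
    have : p * w = p * c - p * c * p := by
      rw [hw]
      have e1 : p * (p * c) = p * c := by rw [← mul_assoc, hpp]
      have e3 : p * (p * c * p) = p * c * p := by
        rw [show p * (p * c * p) = (p * p) * c * p by noncomm_ring, hpp]
      rw [mul_sub, mul_add, mul_add, e1, e3]
      noncomm_ring
    rw [← this, hpw]
  have hwp2 : c * p - p * c * p = 0 := by
    have : w * p = c * p - p * c * p := by
      rw [hw]
      have e1 : (p * c) * p = p * c * p := by noncomm_ring
      have e2 : (c * p) * p = c * p := by rw [mul_assoc, hpp]
      have e3 : (p * c * p) * p = p * c * p := by rw [mul_assoc, hpp]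
      rw [sub_mul, add_mul, add_mul, e1, e2, e3]
      noncomm_ring
    rw [← this, hwp]
  have h5 : p * c - p * c * p = c * p - p * c * p := hpw2.trans hwp2.symm
  exact (sub_left_inj.mp h5).symm

end SynapticAlgebra

open SynapticAlgebra Filter

variable {R : Type*} [Ring R] [Algebra ℝ R]

/-- Theorem 3.3: with `p := (a⁺)°` and `q := (a⁻)°`: (i) `p, q ∈ CC(a)`;
(ii) `p` and `q` commute with `|a|`; (iii) `pa = ap = a⁺`; (iv) `qa = aq = −a⁻`;
(v) `0 ≤ p|a| = |a|p = a⁺`; (vi) `0 ≤ q|a| = |a|q = a⁻`; (vii) `pq = qp = 0`;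
(viii) `p + q = a°`. -/
theorem stmt7 (S : SynapticAlgebra R) {a : R} (ha : a ∈ S.carrier)
    (p q : R) (hpdef : p = S.carr (S.posPart a)) (hqdef : q = S.carr (S.negPart a)) :
    (S.inCC a p ∧ S.inCC a q) ∧
    (p * S.abs a = S.abs a * p ∧ q * S.abs a = S.abs a * q) ∧
    (p * a = S.posPart a ∧ a * p = S.posPart a) ∧
    (q * a = -(S.negPart a) ∧ a * q = -(S.negPart a)) ∧
    (p * S.abs a ∈ S.Pos ∧ p * S.abs a = S.posPart a ∧ S.abs a * p = S.posPart a) ∧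
    (q * S.abs a ∈ S.Pos ∧ q * S.abs a = S.negPart a ∧ S.abs a * q = S.negPart a) ∧
    (p * q = 0 ∧ q * p = 0) ∧
    (p + q = S.carr a) := by
  have habs : S.abs a = S.sqrt (a * a) := rfl
  obtain ⟨hsPos, hsCC, hss⟩ := S.sqrt_spec (S.SA3 ha)
  rw [← habs] at hsPos hsCC hss
  set s : R := S.abs a with hsdef
  have hs_mem : s ∈ S.carrier := S.pos_subset hsPos
  have hsa : a * s = s * a := hsCC a ha (mul_assoc a a a).symm
  set u : R := S.posPart a with hudef
  set v : R := S.negPart a with hvdef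
  have hu : u = (1/2 : ℝ) • (s + a) := rfl
  have hv : v = (1/2 : ℝ) • (s - a) := rfl
  have hu_mem : u ∈ S.carrier := by rw [hu]; exact S.smul_mem _ (S.add_mem hs_mem ha)
  have hv_mem : v ∈ S.carrier := by rw [hv]; exact S.smul_mem _ (S.sub_mem' hs_mem ha)
  have hsum : u + v = s := by rw [hu, hv]; module
  have hdiff : u - v = a := by rw [hu, hv]; module
  have huv : u * v = 0 := by
    rw [hu, hv, smul_mul_assoc, mul_smul_comm, smul_smul]
    have e0 : (s + a) * (s - a) = 0 := by
      have e : (s + a) * (s - a) = (s * s - a * a) + (a * s - s * a) := by noncomm_ring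
      rw [e, hss, hsa]; simp
    rw [e0, smul_zero]
  have hvu : v * u = 0 := by
    rw [hu, hv, smul_mul_assoc, mul_smul_comm, smul_smul]
    have e0 : (s - a) * (s + a) = 0 := by
      have e : (s - a) * (s + a) = (s * s - a * a) + (s * a - a * s) := by noncomm_ring
      rw [e, hss, hsa]; simp
    rw [e0, smul_zero]
  have hsu : s * u = u * s := by
    rw [hu, mul_smul_comm, smul_mul_assoc]; congr 1; rw [mul_add, add_mul, hsa]
  have hau : a * u = u * a := by
    rw [hu, mul_smul_comm, smul_mul_assoc]; congr 1; rw [mul_add, add_mul, hsa]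
  have hsv : s * v = v * s := by
    rw [hv, mul_smul_comm, smul_mul_assoc]; congr 1; rw [mul_sub, sub_mul, hsa]
  have hav : a * v = v * a := by
    rw [hv, mul_smul_comm, smul_mul_assoc]; congr 1; rw [mul_sub, sub_mul, hsa]
  have keyu : ∀ c ∈ S.carrier, c * a = a * c → c * u = u * c := by
    intro c hc hca
    have hcaa : c * (a * a) = (a * a) * c := by
      rw [← mul_assoc, hca, mul_assoc, hca, ← mul_assoc]
    have hcs : c * s = s * c := hsCC c hc hcaa
    rw [hu, mul_smul_comm, smul_mul_assoc]; congr 1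
    rw [mul_add, add_mul, hcs, hca]
  have keyv : ∀ c ∈ S.carrier, c * a = a * c → c * v = v * c := by
    intro c hc hca
    have hcaa : c * (a * a) = (a * a) * c := by
      rw [← mul_assoc, hca, mul_assoc, hca, ← mul_assoc]
    have hcs : c * s = s * c := hsCC c hc hcaa
    rw [hv, mul_smul_comm, smul_mul_assoc]; congr 1
    rw [mul_sub, sub_mul, hcs, hca]
  obtain ⟨hp_mem, hpp, hpiff⟩ := S.carr_spec hu_mem
  obtain ⟨hq_mem, hqq, hqiff⟩ := S.carr_spec hv_mem
  rw [← hpdef] at hp_mem hpp hpiff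
  rw [← hqdef] at hq_mem hqq hqiff
  have hup : u * p = u := by rw [hpdef]; exact S.carr_mul_right hu_mem
  have hpu : p * u = u := by rw [hpdef]; exact S.carr_mul_left hu_mem
  have hvq : v * q = v := by rw [hqdef]; exact S.carr_mul_right hv_mem
  have hqv : q * v = v := by rw [hqdef]; exact S.carr_mul_left hv_mem
  have hcommp : ∀ c ∈ S.carrier, c * u = u * c → c * p = p * c := by
    intro c hc h; rw [hpdef]; exact S.carr_comm hu_mem hc h
  have hcommq : ∀ c ∈ S.carrier, c * v = v * c → c * q = q * c := by
    intro c hc h; rw [hqdef]; exact S.carr_comm hv_mem hc h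
  have hpv : p * v = 0 := (hpiff v hv_mem).mp huv
  have hqu : q * u = 0 := (hqiff u hu_mem).mp hvu
  have hpa : p * a = u := by rw [← hdiff, mul_sub, hpu, hpv, sub_zero]
  have hap : a * p = u := by rw [hcommp a ha hau, hpa]
  have hqa : q * a = -v := by rw [← hdiff, mul_sub, hqu, hqv, zero_sub]
  have haq : a * q = -v := by rw [hcommq a ha hav, hqa]
  have hps : p * s = u := by rw [← hsum, mul_add, hpu, hpv, add_zero]
  have hsp : s * p = p * s := hcommp s hs_mem hsu
  have hqs : q * s = v := by rw [← hsum, mul_add, hqu, hqv, zero_add]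
  have hsq : s * q = q * s := hcommq s hs_mem hsv
  have hpPos : p ∈ S.Pos := by rw [← hpp]; exact S.SA3 hp_mem
  have hqPos : q ∈ S.Pos := by rw [← hqq]; exact S.SA3 hq_mem
  have hpsPos : p * s ∈ S.Pos := S.SA2 hpPos hsPos hsp.symm
  have hqsPos : q * s ∈ S.Pos := S.SA2 hqPos hsPos hsq.symm
  have huq : u * q = 0 := S.mul_zero_symm hq_mem hu_mem hqu
  have hpq : p * q = 0 := (hpiff q hq_mem).mp huq
  have hqp : q * p = 0 := S.mul_zero_symm hp_mem hq_mem hpq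
  -- part (viii)
  obtain ⟨hr_mem, hrr, hriff⟩ := S.carr_spec ha
  set r : R := S.carr a with hrdef
  have har : a * r = a := S.carr_mul_right ha
  have he_mem : p + q ∈ S.carrier := S.add_mem hp_mem hq_mem
  have hae : a * (p + q) = a := by rw [mul_add, hap, haq, ← hdiff, sub_eq_add_neg]
  have hea : (p + q) * a = a := by rw [add_mul, hpa, hqa, ← hdiff, sub_eq_add_neg]
  have h1e_mem : (1 : R) - (p + q) ∈ S.carrier := S.sub_mem' S.one_mem he_mem
  have h1e : a * (1 - (p + q)) = 0 := by rw [mul_sub, mul_one, hae, sub_self]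
  have hre : r * (1 - (p + q)) = 0 := (hriff _ h1e_mem).mp h1e
  have hre2 : r * (p + q) = r := by
    rw [mul_sub, mul_one, sub_eq_zero] at hre; exact hre.symm
  have hur : u * r = u := by rw [← hpa, mul_assoc, har]
  have h1r_mem : (1 : R) - r ∈ S.carrier := S.sub_mem' S.one_mem hr_mem
  have hu1r : u * (1 - r) = 0 := by rw [mul_sub, mul_one, hur, sub_self]
  have hp1r : p * (1 - r) = 0 := (hpiff _ h1r_mem).mp hu1r
  have hpr : p * r = p := by rw [mul_sub, mul_one, sub_eq_zero] at hp1r; exact hp1r.symm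
  have hvr : v * r = v := by
    have h1 : v = -(q * a) := by rw [hqa, neg_neg]
    rw [h1, neg_mul, mul_assoc, har]
  have hv1r : v * (1 - r) = 0 := by rw [mul_sub, mul_one, hvr, sub_self]
  have hq1r : q * (1 - r) = 0 := (hqiff _ h1r_mem).mp hv1r
  have hqr : q * r = q := by rw [mul_sub, mul_one, sub_eq_zero] at hq1r; exact hq1r.symm
  have her : (p + q) * r = p + q := by rw [add_mul, hpr, hqr]
  have hcomm : (p + q) * r = r * (p + q) := by
    rw [hrdef]; exact S.carr_comm ha he_mem (hea.trans hae.symm)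
  have hviii : p + q = r := by rw [← her, hcomm, hre2]
  exact ⟨⟨⟨hp_mem, fun c hc hca => hcommp c hc (keyu c hc hca)⟩,
          ⟨hq_mem, fun c hc hca => hcommq c hc (keyv c hc hca)⟩⟩,
    ⟨hsp.symm, hsq.symm⟩,
    ⟨hpa, hap⟩, ⟨hqa, haq⟩,
    ⟨hpsPos, hps, hsp.trans hps⟩,
    ⟨hqsPos, hqs, hsq.trans hqs⟩,
    ⟨hpq, hqp⟩, hviii⟩
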